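/- arXiv:2502.12607 — 5 statements merged into one kernel-verified Lean document; each statement's English description precedes it below -/
import Mathlib

section
/- Let H be a real inner product space, n ∈ ℕ, φ₁,…,φₙ ∈ H, y₁,…,yₙ ∈ {−1,+1}, and λ > 0. Define the regularized logistic primal objective P(θ) = Σᵢ log(1 + exp(−yᵢ·⟨φᵢ, θ⟩)) + (λ/2)·‖θ‖² and, for α ∈ [0,1]ⁿ, the dual objective D(α) = −Σᵢ (αᵢ·log αᵢ + (1−αᵢ)·log(1−αᵢ)) − (1/(2λ))·‖Σᵢ αᵢ·yᵢ·φᵢ‖² (with the convention 0·log 0 = 0). If θ_S ∈ H is a global minimizer of P, then for every θ_O ∈ H and every α̃ ∈ [0,1]ⁿ, ‖θ_O − θ_S‖² ≤ (2/λ)·(P(θ_O) − D(α̃)). -/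
open RealInnerProductSpace

private lemma gibbs_aux {a q : ℝ} (ha0 : 0 ≤ a) (ha1 : a ≤ 1) (hq0 : 0 < q) (hq1 : q < 1) :
    a * Real.log q + (1 - a) * Real.log (1 - q) ≤
      a * Real.log a + (1 - a) * Real.log (1 - a) := by
  rcases eq_or_lt_of_le ha0 with h0 | h0
  · have : Real.log (1 - q) ≤ 0 := Real.log_nonpos (by linarith) (by linarith)
    simp [← h0]
    linarith
  rcases eq_or_lt_of_le ha1 with h1 | h1
  · have : Real.log q ≤ 0 := Real.log_nonpos hq0.le hq1.le
    simp [h1]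
    linarith
  have ha1' : 0 < 1 - a := by linarith
  have k1 : Real.log q - Real.log a ≤ q / a - 1 := by
    rw [← Real.log_div hq0.ne' h0.ne']
    exact Real.log_le_sub_one_of_pos (div_pos hq0 h0)
  have k2 : Real.log (1 - q) - Real.log (1 - a) ≤ (1 - q) / (1 - a) - 1 := by
    rw [← Real.log_div (by linarith) ha1'.ne']
    exact Real.log_le_sub_one_of_pos (div_pos (by linarith) ha1')
  have m1 : a * (Real.log q - Real.log a) ≤ q - a := by
    have := mul_le_mul_of_nonneg_left k1 h0.le
    have e : a * (q / a - 1) = q - a := by field_simp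
    linarith [e ▸ this]
  have m2 : (1 - a) * (Real.log (1 - q) - Real.log (1 - a)) ≤ a - q := by
    have := mul_le_mul_of_nonneg_left k2 ha1'.le
    have e : (1 - a) * ((1 - q) / (1 - a) - 1) = a - q := by field_simp; ring
    linarith [e ▸ this]
  nlinarith [m1, m2]

private lemma fenchel_aux {a : ℝ} (ha0 : 0 ≤ a) (ha1 : a ≤ 1) (z : ℝ) :
    -(a * Real.log a + (1 - a) * Real.log (1 - a)) ≤
      Real.log (1 + Real.exp (-z)) + a * z := by
  have hE : 0 < Real.exp (-z) := Real.exp_pos _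
  have h1E : 0 < 1 + Real.exp (-z) := by linarith
  set E := Real.exp (-z) with hEdef
  set q : ℝ := E / (1 + E) with hqdef
  have hq0 : 0 < q := div_pos hE h1E
  have hq1 : q < 1 := (div_lt_one h1E).2 (by linarith)
  have hlogq : Real.log q = -z - Real.log (1 + E) := by
    rw [hqdef, Real.log_div hE.ne' h1E.ne', hEdef, Real.log_exp]
  have hlog1q : Real.log (1 - q) = -Real.log (1 + E) := by
    have h : 1 - q = 1 / (1 + E) := by rw [hqdef]; field_simp; ring
    rw [h, one_div, Real.log_inv]
  have := gibbs_aux ha0 ha1 hq0 hq1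
  rw [hlogq, hlog1q] at this
  nlinarith [this]

private lemma logistic_convex {t : ℝ} (ht0 : 0 ≤ t) (ht1 : t ≤ 1) (a b : ℝ) :
    Real.log (1 + Real.exp (-((1 - t) * a + t * b))) ≤
      (1 - t) * Real.log (1 + Real.exp (-a)) + t * Real.log (1 + Real.exp (-b)) := by
  have hs0 : (0:ℝ) ≤ 1 - t := by linarith
  have heA : 0 < Real.exp (-a) := Real.exp_pos _
  have heB : 0 < Real.exp (-b) := Real.exp_pos _
  set X : ℝ := 1 + Real.exp (-a) with hXdef
  set Y : ℝ := 1 + Real.exp (-b) with hYdef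
  have hX : 0 < X := by positivity
  have hY : 0 < Y := by positivity
  have hA : 0 < X ^ (1 - t) := Real.rpow_pos_of_pos hX _
  have hB : 0 < Y ^ t := Real.rpow_pos_of_pos hY _
  -- Hölder-type bound: 1 + exp(-c) ≤ X^(1-t) * Y^t
  have h1 : ((1:ℝ)/X) ^ (1 - t) * ((1:ℝ)/Y) ^ t ≤ (1 - t) * (1/X) + t * (1/Y) :=
    Real.geom_mean_le_arith_mean2_weighted hs0 ht0 (by positivity) (by positivity) (by ring)
  have h2 : (Real.exp (-a)/X) ^ (1 - t) * (Real.exp (-b)/Y) ^ t ≤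
      (1 - t) * (Real.exp (-a)/X) + t * (Real.exp (-b)/Y) :=
    Real.geom_mean_le_arith_mean2_weighted hs0 ht0 (by positivity) (by positivity) (by ring)
  have hsum : ((1:ℝ)/X) ^ (1 - t) * ((1:ℝ)/Y) ^ t
      + (Real.exp (-a)/X) ^ (1 - t) * (Real.exp (-b)/Y) ^ t ≤ 1 := by
    have e1 : (1 - t) * (1/X) + t * (1/Y) + ((1 - t) * (Real.exp (-a)/X) + t * (Real.exp (-b)/Y))
        = (1:ℝ) := by
      field_simp
      ring
    linarith [h1, h2]
  have hdiv1 : ((1:ℝ)/X) ^ (1 - t) = 1 / X ^ (1 - t) := by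
    rw [Real.div_rpow zero_le_one hX.le _, Real.one_rpow]
  have hdiv2 : ((1:ℝ)/Y) ^ t = 1 / Y ^ t := by
    rw [Real.div_rpow zero_le_one hY.le _, Real.one_rpow]
  have hdiv3 : (Real.exp (-a)/X) ^ (1 - t) = Real.exp (-a) ^ (1 - t) / X ^ (1 - t) :=
    Real.div_rpow heA.le hX.le _
  have hdiv4 : (Real.exp (-b)/Y) ^ t = Real.exp (-b) ^ t / Y ^ t :=
    Real.div_rpow heB.le hY.le _
  have hexp : Real.exp (-a) ^ (1 - t) * Real.exp (-b) ^ t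
      = Real.exp (-((1 - t) * a + t * b)) := by
    rw [← Real.exp_mul, ← Real.exp_mul, ← Real.exp_add]
    ring_nf
  have key : 1 + Real.exp (-((1 - t) * a + t * b)) ≤ X ^ (1 - t) * Y ^ t := by
    rw [hdiv1, hdiv2, hdiv3, hdiv4] at hsum
    rw [div_mul_div_comm, div_mul_div_comm, ← add_div, hexp] at hsum
    calc 1 + Real.exp (-((1 - t) * a + t * b))
        = (1 + Real.exp (-((1 - t) * a + t * b))) / (X ^ (1 - t) * Y ^ t)
            * (X ^ (1 - t) * Y ^ t) := by field_simp
      _ ≤ 1 * (X ^ (1 - t) * Y ^ t) := by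
          apply mul_le_mul_of_nonneg_right _ (by positivity)
          simpa using hsum
      _ = X ^ (1 - t) * Y ^ t := one_mul _
  calc Real.log (1 + Real.exp (-((1 - t) * a + t * b)))
      ≤ Real.log (X ^ (1 - t) * Y ^ t) := (Real.log_le_log_iff (by positivity) (by positivity)).2 key
    _ = (1 - t) * Real.log X + t * Real.log Y := by
        rw [Real.log_mul (by positivity) (by positivity),
          Real.log_rpow hX, Real.log_rpow hY]

private lemma norm_combo_aux {H : Type*} [NormedAddCommGroup H] [InnerProductSpace ℝ H]
    (u v : H) (t : ℝ) :
    ‖u + t • (v - u)‖ ^ 2 = (1 - t) * ‖u‖ ^ 2 + t * ‖v‖ ^ 2 - t * (1 - t) * ‖v - u‖ ^ 2 := by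
  have e : ∀ w : H, ‖w‖ ^ 2 = ⟪w, w⟫ := fun w => (real_inner_self_eq_norm_sq w).symm
  rw [e, e, e, e]
  simp only [inner_add_left, inner_add_right, inner_sub_left, inner_sub_right,
    real_inner_smul_left, real_inner_smul_right, real_inner_comm u v]
  ring

theorem dgkip_logistic_duality_gap_bound
    {H : Type*} [NormedAddCommGroup H] [InnerProductSpace ℝ H]
    (n : ℕ) (φ : Fin n → H) (y : Fin n → ℝ)
    (hy : ∀ i, y i = 1 ∨ y i = -1)
    (lam : ℝ) (hlam : 0 < lam)
    (P : H → ℝ)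
    (hP : ∀ θ : H, P θ =
      (∑ i, Real.log (1 + Real.exp (-(y i * ⟪φ i, θ⟫)))) + lam / 2 * ‖θ‖ ^ 2)
    (D : (Fin n → ℝ) → ℝ)
    (hD : ∀ α : Fin n → ℝ, D α =
      -(∑ i, (α i * Real.log (α i) + (1 - α i) * Real.log (1 - α i)))
        - 1 / (2 * lam) * ‖∑ i, α i • y i • φ i‖ ^ 2)
    (θS : H) (hmin : ∀ θ : H, P θS ≤ P θ) :
    ∀ θO : H, ∀ α : Fin n → ℝ, (∀ i, α i ∈ Set.Icc (0 : ℝ) 1) →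
      ‖θO - θS‖ ^ 2 ≤ (2 / lam) * (P θO - D α) := by
  intro θO α hα
  -- Weak duality : D α ≤ P θS
  have hweak : D α ≤ P θS := by
    rw [hD, hP]
    set v : H := ∑ i, α i • y i • φ i with hvdef
    have hinner : ⟪v, θS⟫ = ∑ i, α i * (y i * ⟪φ i, θS⟫) := by
      rw [hvdef, sum_inner]
      refine Finset.sum_congr rfl fun i _ => ?_
      rw [real_inner_smul_left, real_inner_smul_left]
    have hterm : ∀ i, -(α i * Real.log (α i) + (1 - α i) * Real.log (1 - α i)) ≤
        Real.log (1 + Real.exp (-(y i * ⟪φ i, θS⟫))) + α i * (y i * ⟪φ i, θS⟫) :=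
      fun i => fenchel_aux (hα i).1 (hα i).2 _
    have hsum : -(∑ i, (α i * Real.log (α i) + (1 - α i) * Real.log (1 - α i))) ≤
        (∑ i, Real.log (1 + Real.exp (-(y i * ⟪φ i, θS⟫)))) + ⟪v, θS⟫ := by
      have h1 : -(∑ i, (α i * Real.log (α i) + (1 - α i) * Real.log (1 - α i)))
          = ∑ i, -(α i * Real.log (α i) + (1 - α i) * Real.log (1 - α i)) :=
        (Finset.sum_neg_distrib _).symm
      rw [hinner, h1, ← Finset.sum_add_distrib]
      exact Finset.sum_le_sum fun i _ => hterm i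
    have hyoung : ⟪v, θS⟫ ≤ 1 / (2 * lam) * ‖v‖ ^ 2 + lam / 2 * ‖θS‖ ^ 2 := by
      have h1 : ⟪v, θS⟫ ≤ ‖v‖ * ‖θS‖ := real_inner_le_norm v θS
      have h2 : 2 * lam * (‖v‖ * ‖θS‖) ≤ ‖v‖ ^ 2 + lam ^ 2 * ‖θS‖ ^ 2 := by
        nlinarith [sq_nonneg (‖v‖ - lam * ‖θS‖)]
      have h3 : ⟪v, θS⟫ ≤ (‖v‖ ^ 2 + lam ^ 2 * ‖θS‖ ^ 2) / (2 * lam) := by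
        rw [le_div_iff₀ (by positivity)]
        nlinarith [mul_le_mul_of_nonneg_left h1 (by positivity : (0:ℝ) ≤ 2 * lam)]
      have h4 : (‖v‖ ^ 2 + lam ^ 2 * ‖θS‖ ^ 2) / (2 * lam)
          = 1 / (2 * lam) * ‖v‖ ^ 2 + lam / 2 * ‖θS‖ ^ 2 := by
        field_simp
      linarith [h4 ▸ h3]
    linarith
  -- Strong convexity : lam/2 * ‖θO - θS‖² ≤ P θO - P θS
  have hsc : lam / 2 * ‖θO - θS‖ ^ 2 ≤ P θO - P θS := by
    have key : ∀ t : ℝ, 0 < t → t < 1 →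
        lam / 2 * (1 - t) * ‖θO - θS‖ ^ 2 ≤ P θO - P θS := by
      intro t ht0 ht1
      have hθt := hmin (θS + t • (θO - θS))
      rw [hP θS, hP θO, hP (θS + t • (θO - θS))] at *
      have hz : ∀ i, y i * ⟪φ i, θS + t • (θO - θS)⟫
          = (1 - t) * (y i * ⟪φ i, θS⟫) + t * (y i * ⟪φ i, θO⟫) := by
        intro i
        rw [inner_add_right, real_inner_smul_right, inner_sub_right]
        ring
      have hlog : (∑ i, Real.log (1 + Real.exp (-(y i * ⟪φ i, θS + t • (θO - θS)⟫))))
          ≤ (1 - t) * (∑ i, Real.log (1 + Real.exp (-(y i * ⟪φ i, θS⟫))))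
            + t * (∑ i, Real.log (1 + Real.exp (-(y i * ⟪φ i, θO⟫)))) := by
        rw [Finset.mul_sum, Finset.mul_sum, ← Finset.sum_add_distrib]
        refine Finset.sum_le_sum fun i _ => ?_
        rw [hz i]
        exact logistic_convex ht0.le ht1.le _ _
      have hnorm : ‖θS + t • (θO - θS)‖ ^ 2
          = (1 - t) * ‖θS‖ ^ 2 + t * ‖θO‖ ^ 2 - t * (1 - t) * ‖θO - θS‖ ^ 2 :=
        norm_combo_aux θS θO t
      rw [hnorm] at hθt
      have hmul : t * (lam / 2 * (1 - t) * ‖θO - θS‖ ^ 2)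
          ≤ t * (((∑ i, Real.log (1 + Real.exp (-(y i * ⟪φ i, θO⟫)))) + lam / 2 * ‖θO‖ ^ 2)
            - ((∑ i, Real.log (1 + Real.exp (-(y i * ⟪φ i, θS⟫)))) + lam / 2 * ‖θS‖ ^ 2)) := by
        nlinarith [hθt, hlog]
      exact le_of_mul_le_mul_left hmul ht0
    by_contra hcon
    push_neg at hcon
    have hd0 : 0 ≤ ‖θO - θS‖ ^ 2 := by positivity
    rcases eq_or_lt_of_le hd0 with hd | hd
    · have h0 : P θS ≤ P θO := hmin θO
      rw [← hd] at hcon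
      simp at hcon
      linarith
    have hε : 0 < lam / 2 * ‖θO - θS‖ ^ 2 - (P θO - P θS) := by linarith
    obtain ⟨t, ht0, ht1, htmul⟩ : ∃ t : ℝ, 0 < t ∧ t < 1 ∧
        t * (lam * ‖θO - θS‖ ^ 2) ≤ lam / 2 * ‖θO - θS‖ ^ 2 - (P θO - P θS) := by
      refine ⟨min (1/2) ((lam / 2 * ‖θO - θS‖ ^ 2 - (P θO - P θS)) / (lam * ‖θO - θS‖ ^ 2)),
        lt_min (by norm_num) (div_pos hε (by positivity)),
        lt_of_le_of_lt (min_le_left _ _) (by norm_num), ?_⟩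
      have h := min_le_right (1/2 : ℝ)
        ((lam / 2 * ‖θO - θS‖ ^ 2 - (P θO - P θS)) / (lam * ‖θO - θS‖ ^ 2))
      rw [← le_div_iff₀ (by positivity : (0:ℝ) < lam * ‖θO - θS‖ ^ 2)]
      exact h
    have hk := key t ht0 ht1
    nlinarith [hk, htmul]
  -- combine
  have hfinal : lam / 2 * ‖θO - θS‖ ^ 2 ≤ P θO - D α := by linarith
  calc ‖θO - θS‖ ^ 2 = (2 / lam) * (lam / 2 * ‖θO - θS‖ ^ 2) := by
        field_simp
    _ ≤ (2 / lam) * (P θO - D α) := mul_le_mul_of_nonneg_left hfinal (by positivity)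
end

section
/- Let H be a real inner product space, n ∈ ℕ, φ₁,…,φₙ ∈ H, y₁,…,yₙ ∈ {−1,+1}, and λ > 0. Define the regularized hinge (SVM) primal objective P(θ) = Σᵢ max(0, 1 − yᵢ·⟨φᵢ, θ⟩) + (λ/2)·‖θ‖² and, for α ∈ [0,1]ⁿ, the dual objective D(α) = Σᵢ αᵢ − (1/(2λ))·‖Σᵢ αᵢ·yᵢ·φᵢ‖². If θ_S ∈ H is a global minimizer of P, then for every θ_O ∈ H and every α̃ ∈ [0,1]ⁿ, ‖θ_O − θ_S‖² ≤ (2/λ)·(P(θ_O) − D(α̃)). -/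
open RealInnerProductSpace

theorem dgkip_svm_duality_gap_bound
    {H : Type*} [NormedAddCommGroup H] [InnerProductSpace ℝ H]
    (n : ℕ) (φ : Fin n → H) (y : Fin n → ℝ)
    (hy : ∀ i, y i = 1 ∨ y i = -1)
    (lam : ℝ) (hlam : 0 < lam)
    (P : H → ℝ)
    (hP : ∀ θ : H, P θ =
      (∑ i, max 0 (1 - y i * ⟪φ i, θ⟫)) + lam / 2 * ‖θ‖ ^ 2)
    (D : (Fin n → ℝ) → ℝ)
    (hD : ∀ α : Fin n → ℝ, D α =
      (∑ i, α i) - 1 / (2 * lam) * ‖∑ i, α i • y i • φ i‖ ^ 2)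
    (θS : H) (hmin : ∀ θ : H, P θS ≤ P θ) :
    ∀ θO : H, ∀ α : Fin n → ℝ, (∀ i, α i ∈ Set.Icc (0 : ℝ) 1) →
      ‖θO - θS‖ ^ 2 ≤ (2 / lam) * (P θO - D α) := by
  intro θO α hα
  set d : H := θO - θS with hd
  -- Weak duality: D α ≤ P θS
  have hwd : D α ≤ P θS := by
    rw [hD, hP]
    set v : H := ∑ i, α i • y i • φ i with hv
    have hvθ : ⟪v, θS⟫ = ∑ i, α i * (y i * ⟪φ i, θS⟫) := by
      rw [hv, sum_inner]
      refine Finset.sum_congr rfl fun i _ => ?_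
      simp [real_inner_smul_left]
    have h1 : ∑ i, α i * (1 - y i * ⟪φ i, θS⟫) ≤
        ∑ i, max 0 (1 - y i * ⟪φ i, θS⟫) := by
      refine Finset.sum_le_sum fun i _ => ?_
      obtain ⟨h0, h1'⟩ := hα i
      rcases le_or_gt 0 (1 - y i * ⟪φ i, θS⟫) with h | h
      · exact le_trans (by nlinarith) (le_max_right _ _)
      · exact le_trans (by nlinarith) (le_max_left _ _)
    have hsplit : ∑ i, α i * (1 - y i * ⟪φ i, θS⟫) =
        (∑ i, α i) - ⟪v, θS⟫ := by
      rw [hvθ, ← Finset.sum_sub_distrib]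
      refine Finset.sum_congr rfl fun i _ => by ring
    have h2 : ⟪v, θS⟫ ≤ lam / 2 * ‖θS‖ ^ 2 + 1 / (2 * lam) * ‖v‖ ^ 2 := by
      have hcs := real_inner_le_norm v θS
      have hsq := sq_nonneg (lam * ‖θS‖ - ‖v‖)
      have h2l : (0:ℝ) < 2 * lam := by linarith
      rw [div_mul_eq_mul_div, div_mul_eq_mul_div, div_add_div _ _ (by norm_num) (ne_of_gt h2l),
        le_div_iff₀ (by positivity)]
      nlinarith [norm_nonneg v, norm_nonneg θS]
    linarith [h1, hsplit ▸ h1]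
  -- Strong convexity at the minimizer
  have key : ∀ t : ℝ, 0 < t → t < 1 →
      lam / 2 * (1 - t) * ‖d‖ ^ 2 ≤ P θO - P θS := by
    intro t ht ht1
    have hθO : θO = θS + d := by rw [hd]; abel
    have e2 : ‖θO‖ ^ 2 = ‖θS‖ ^ 2 + 2 * ⟪θS, d⟫ + ‖d‖ ^ 2 := by
      rw [hθO, norm_add_sq_real]
    have e1 : ‖θS + t • d‖ ^ 2 = ‖θS‖ ^ 2 + 2 * (t * ⟪θS, d⟫) + t ^ 2 * ‖d‖ ^ 2 := by
      rw [norm_add_sq_real, real_inner_smul_right, norm_smul, mul_pow]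
      have : |t| = t := abs_of_pos ht
      simp [Real.norm_eq_abs, this]
    have hsum : ∑ i, max 0 (1 - y i * ⟪φ i, θS + t • d⟫) ≤
        (1 - t) * (∑ i, max 0 (1 - y i * ⟪φ i, θS⟫)) +
        t * (∑ i, max 0 (1 - y i * ⟪φ i, θO⟫)) := by
      rw [Finset.mul_sum, Finset.mul_sum, ← Finset.sum_add_distrib]
      refine Finset.sum_le_sum fun i _ => ?_
      have hip : ⟪φ i, θS + t • d⟫ = ⟪φ i, θS⟫ + t * (⟪φ i, θO⟫ - ⟪φ i, θS⟫) := by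
        rw [inner_add_right, real_inner_smul_right, hd, inner_sub_right]
      set a : ℝ := 1 - y i * ⟪φ i, θS⟫ with ha
      set b : ℝ := 1 - y i * ⟪φ i, θO⟫ with hb
      have harg : 1 - y i * ⟪φ i, θS + t • d⟫ = (1 - t) * a + t * b := by
        rw [hip, ha, hb]; ring
      rw [harg]
      have hma := le_max_left (0:ℝ) a
      have hmb := le_max_left (0:ℝ) b
      have hma' := le_max_right (0:ℝ) a
      have hmb' := le_max_right (0:ℝ) b
      refine max_le ?_ ?_
      · nlinarith
      · nlinarith
    have hconv : P (θS + t • d) ≤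
        (1 - t) * P θS + t * P θO - lam / 2 * (t * (1 - t)) * ‖d‖ ^ 2 := by
      rw [hP, hP, hP, e1, e2]
      nlinarith [hsum]
    have hm := hmin (θS + t • d)
    nlinarith [hm, hconv]
  have hstrong : lam / 2 * ‖d‖ ^ 2 ≤ P θO - P θS := by
    refine le_of_forall_pos_le_add fun ε hε => ?_
    set c : ℝ := lam / 2 * ‖d‖ ^ 2 with hc
    have hc0 : 0 ≤ c := by positivity
    set t : ℝ := min (ε / (c + 1)) (1 / 2) with htdef
    have ht : 0 < t := lt_min (by positivity) (by norm_num)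
    have ht1 : t < 1 := lt_of_le_of_lt (min_le_right _ _) (by norm_num)
    have hk := key t ht ht1
    have htle : t ≤ ε / (c + 1) := min_le_left _ _
    have hct : c * t ≤ ε := by
      have h1 : c * t ≤ c * (ε / (c + 1)) :=
        mul_le_mul_of_nonneg_left htle hc0
      have h2 : c * (ε / (c + 1)) ≤ ε := by
        rw [mul_div_assoc', div_le_iff₀ (by linarith)]
        nlinarith
      linarith
    nlinarith [hk]
  rw [div_mul_eq_mul_div, le_div_iff₀ hlam]
  nlinarith [hstrong, hwd]
end

section
/- Let H be a real inner product space, n ∈ ℕ, φ₁,…,φₙ ∈ H, y₁,…,yₙ ∈ {−1,+1}, and λ > 0. For the regularized logistic primal objective P(θ) = Σᵢ log(1 + exp(−yᵢ·⟨φᵢ, θ⟩)) + (λ/2)·‖θ‖² and the dual objective D(α) = −Σᵢ (αᵢ·log αᵢ + (1−αᵢ)·log(1−αᵢ)) − (1/(2λ))·‖Σᵢ αᵢ·yᵢ·φᵢ‖² (convention 0·log 0 = 0), weak duality holds: for every θ ∈ H and every α ∈ [0,1]ⁿ, D(α) ≤ P(θ). In particular the duality gap P(θ) − D(α) is nonnegative.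 -/
open RealInnerProductSpace

lemma logistic_fenchel (z a : ℝ) (h0 : 0 ≤ a) (h1 : a ≤ 1) :
    -(a * z) ≤ Real.log (1 + Real.exp (-z))
      + (a * Real.log a + (1 - a) * Real.log (1 - a)) := by
  rcases eq_or_lt_of_le h0 with h0' | h0'
  · simp only [← h0', zero_mul, neg_zero, sub_zero, one_mul, Real.log_one, add_zero, zero_add]
    exact Real.log_nonneg (by linarith [Real.exp_pos (-z)])
  rcases eq_or_lt_of_le h1 with h1' | h1'
  · subst h1'
    simp only [sub_self, zero_mul, mul_one, add_zero, Real.log_one, mul_zero, one_mul]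
    have hle : Real.exp (-z) ≤ 1 + Real.exp (-z) := by linarith [Real.exp_pos (-z)]
    have h := Real.log_le_log (Real.exp_pos (-z)) hle
    rw [Real.log_exp] at h
    linarith
  -- interior case
  set t := Real.exp (-z) with ht
  have htpos : 0 < t := Real.exp_pos _
  have hb : 0 < 1 - a := by linarith
  have hcc := (strictConcaveOn_log_Ioi.concaveOn).2
    (x := t / a) (y := 1 / (1 - a))
    (Set.mem_Ioi.2 (by positivity)) (Set.mem_Ioi.2 (by positivity))
    (le_of_lt h0') (le_of_lt hb) (by ring)
  have hsum : a • (t / a) + (1 - a) • (1 / (1 - a)) = t + 1 := by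
    simp only [smul_eq_mul]
    field_simp
  rw [hsum] at hcc
  have hlt : Real.log (t / a) = Real.log t - Real.log a :=
    Real.log_div (ne_of_gt htpos) (ne_of_gt h0')
  have hlb : Real.log (1 / (1 - a)) = - Real.log (1 - a) := by
    rw [Real.log_div one_ne_zero (ne_of_gt hb), Real.log_one]; ring
  have hlz : Real.log t = -z := Real.log_exp _
  have h1t : Real.log (t + 1) = Real.log (1 + t) := by ring_nf
  simp only [smul_eq_mul, hlt, hlb, hlz] at hcc
  nlinarith [hcc]

theorem logistic_weak_duality
    {H : Type*} [NormedAddCommGroup H] [InnerProductSpace ℝ H]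
    (n : ℕ) (φ : Fin n → H) (y : Fin n → ℝ)
    (hy : ∀ i, y i = 1 ∨ y i = -1)
    (lam : ℝ) (hlam : 0 < lam)
    (P : H → ℝ)
    (hP : ∀ θ : H, P θ =
      (∑ i, Real.log (1 + Real.exp (-(y i * ⟪φ i, θ⟫)))) + lam / 2 * ‖θ‖ ^ 2)
    (D : (Fin n → ℝ) → ℝ)
    (hD : ∀ α : Fin n → ℝ, D α =
      -(∑ i, (α i * Real.log (α i) + (1 - α i) * Real.log (1 - α i)))
        - 1 / (2 * lam) * ‖∑ i, α i • y i • φ i‖ ^ 2) :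
    ∀ θ : H, ∀ α : Fin n → ℝ, (∀ i, α i ∈ Set.Icc (0 : ℝ) 1) →
      D α ≤ P θ ∧ 0 ≤ P θ - D α := by
  intro θ α hα
  have key : D α ≤ P θ := by
    rw [hP, hD]
    set v := ∑ i, α i • y i • φ i with hv
    have hinner : ⟪v, θ⟫ = ∑ i, α i * (y i * ⟪φ i, θ⟫) := by
      rw [hv, sum_inner]
      refine Finset.sum_congr rfl fun i _ => ?_
      rw [real_inner_smul_left, real_inner_smul_left]
    have hsum : ∑ i, -(α i * (y i * ⟪φ i, θ⟫)) ≤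
        ∑ i, (Real.log (1 + Real.exp (-(y i * ⟪φ i, θ⟫)))
          + (α i * Real.log (α i) + (1 - α i) * Real.log (1 - α i))) := by
      refine Finset.sum_le_sum fun i _ => ?_
      exact logistic_fenchel _ _ (hα i).1 (hα i).2
    rw [Finset.sum_add_distrib] at hsum
    have hsum' : -⟪v, θ⟫ ≤ ∑ i, Real.log (1 + Real.exp (-(y i * ⟪φ i, θ⟫)))
        + ∑ i, (α i * Real.log (α i) + (1 - α i) * Real.log (1 - α i)) := by
      rw [hinner, ← Finset.sum_neg_distrib]
      exact hsum
    have hquad : ⟪v, θ⟫ ≤ lam / 2 * ‖θ‖ ^ 2 + 1 / (2 * lam) * ‖v‖ ^ 2 := by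
      have h1 : |⟪v, θ⟫| ≤ ‖v‖ * ‖θ‖ := abs_real_inner_le_norm v θ
      have h2 : ⟪v, θ⟫ ≤ ‖v‖ * ‖θ‖ := le_of_abs_le h1
      have h3 : ‖v‖ * ‖θ‖ ≤ lam / 2 * ‖θ‖ ^ 2 + 1 / (2 * lam) * ‖v‖ ^ 2 := by
        rw [← sub_nonneg]
        have he : lam / 2 * ‖θ‖ ^ 2 + 1 / (2 * lam) * ‖v‖ ^ 2 - ‖v‖ * ‖θ‖
            = (lam * ‖θ‖ - ‖v‖) ^ 2 / (2 * lam) := by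
          field_simp
          ring
        rw [he]
        positivity
      linarith
    linarith
  exact ⟨key, by linarith⟩
end

section
/- Let H be a real inner product space, let λ > 0, and let P : H → ℝ be λ-strongly convex on H with global minimizer θ_S ∈ H. Let d ∈ ℝ satisfy d ≤ P(θ_S). Then for every θ_O ∈ H and every w ∈ H, |⟨w, θ_S⟩ − ⟨w, θ_O⟩| ≤ ‖w‖ · √((2/λ)·(P(θ_O) − d)). -/
open RealInnerProductSpace

theorem duality_gap_prediction_bound
    {H : Type*} [NormedAddCommGroup H] [InnerProductSpace ℝ H]
    (lam : ℝ) (hlam : 0 < lam) (P : H → ℝ)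
    (hsc : ∀ x y : H, ∀ t : ℝ, t ∈ Set.Icc (0 : ℝ) 1 →
      P (t • x + (1 - t) • y) ≤
        t * P x + (1 - t) * P y - (lam / 2) * t * (1 - t) * ‖x - y‖ ^ 2)
    (θS : H) (hmin : ∀ θ : H, P θS ≤ P θ)
    (d : ℝ) (hd : d ≤ P θS) :
    ∀ θO : H, ∀ w : H,
      |⟪w, θS⟫ - ⟪w, θO⟫| ≤ ‖w‖ * Real.sqrt ((2 / lam) * (P θO - d)) := by
  intro θO w
  set a : ℝ := lam / 2 * ‖θO - θS‖ ^ 2 with ha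
  set G : ℝ := P θO - d with hG
  have hG0 : 0 ≤ G := by
    have := hmin θO
    simp only [hG]; linarith
  -- key: a ≤ G, via a*(1-t) ≤ P θO - P θS for all t ∈ (0,1]
  have key : ∀ t : ℝ, 0 < t → t ≤ 1 → a * (1 - t) ≤ P θO - P θS := by
    intro t ht0 ht1
    have h := hsc θO θS t ⟨le_of_lt ht0, ht1⟩
    have h2 := hmin (t • θO + (1 - t) • θS)
    have h3 : t * (a * (1 - t)) ≤ t * (P θO - P θS) := by
      simp only [ha]; nlinarith [h, h2]
    exact le_of_mul_le_mul_left h3 ht0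
  have haG : a ≤ G := by
    refine le_of_forall_pos_le_add ?_
    intro ε hε
    have ha0 : 0 ≤ a := by
      have : 0 ≤ ‖θO - θS‖ ^ 2 := sq_nonneg _
      positivity
    rcases eq_or_lt_of_le ha0 with h0 | hpos
    · have := hmin θO; simp only [hG]; rw [← h0]; linarith
    · set t : ℝ := min 1 (ε / a) with ht
      have ht0 : 0 < t := lt_min one_pos (div_pos hε hpos)
      have ht1 : t ≤ 1 := min_le_left _ _
      have h := key t ht0 ht1
      have hat : a * t ≤ ε := by
        calc a * t ≤ a * (ε / a) := by
              apply mul_le_mul_of_nonneg_left (min_le_right _ _) ha0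
          _ = ε := by field_simp
      have : P θO - P θS ≤ G := by simp only [hG]; linarith
      nlinarith
  -- hence ‖θS - θO‖ ≤ sqrt ((2/lam) * G)
  have hnorm : ‖θS - θO‖ ≤ Real.sqrt ((2 / lam) * G) := by
    rw [show θS - θO = -(θO - θS) by abel, norm_neg]
    have hsq : ‖θO - θS‖ ^ 2 ≤ 2 / lam * G := by
      rw [ha] at haG
      rw [div_mul_eq_mul_div, le_div_iff₀ hlam]
      nlinarith
    exact (Real.le_sqrt (norm_nonneg _) (by positivity)).mpr hsq
  calc |⟪w, θS⟫ - ⟪w, θO⟫| = |⟪w, θS - θO⟫| := by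
        rw [inner_sub_right]
    _ ≤ ‖w‖ * ‖θS - θO‖ := abs_real_inner_le_norm _ _
    _ ≤ ‖w‖ * Real.sqrt ((2 / lam) * G) :=
        mul_le_mul_of_nonneg_left hnorm (norm_nonneg _)
end

section
/- Let H be a real inner product space, let θ_O, θ_S ∈ H, let r ≥ 0 with ‖θ_S − θ_O‖ ≤ r, and let (w₁, y₁), …, (w_{n'}, y_{n'}) be a finite test set with wᵢ ∈ H and yᵢ ∈ {−1,+1}. Define n_mis = #{i : yᵢ·⟨wᵢ, θ_O⟩ + r·‖wᵢ‖ < 0} (certainly misclassified points) and n_cor = #{i : yᵢ·⟨wᵢ, θ_O⟩ − r·‖wᵢ‖ > 0} (certainly correctly classified points). Then n_mis ≤ #{i : yᵢ·⟨wᵢ, θ_S⟩ < 0} and #{i : yᵢ·⟨wᵢ, θ_S⟩ ≤ 0} ≤ n' − n_cor. Equivalently, the test error of θ_S satisfies n_mis/n' ≤ TeEr ≤ (n' − n_cor)/n'. -/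
open RealInnerProductSpace Finset

theorem test_error_bounds
    {H : Type*} [NormedAddCommGroup H] [InnerProductSpace ℝ H]
    (θO θS : H) (r : ℝ) (hr : 0 ≤ r) (hdev : ‖θS - θO‖ ≤ r)
    (n' : ℕ) (w : Fin n' → H) (y : Fin n' → ℝ)
    (hy : ∀ i, y i = 1 ∨ y i = -1) :
    ((univ.filter fun i : Fin n' =>
          y i * ⟪w i, θO⟫ + r * ‖w i‖ < 0).card
        ≤ (univ.filter fun i : Fin n' => y i * ⟪w i, θS⟫ < 0).card) ∧
    ((univ.filter fun i : Fin n' => y i * ⟪w i, θS⟫ ≤ 0).card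
        ≤ n' - (univ.filter fun i : Fin n' =>
            0 < y i * ⟪w i, θO⟫ - r * ‖w i‖).card) := by
  have key : ∀ i, |y i * ⟪w i, θS⟫ - y i * ⟪w i, θO⟫| ≤ r * ‖w i‖ := by
    intro i
    have h1 : y i * ⟪w i, θS⟫ - y i * ⟪w i, θO⟫ = y i * ⟪w i, θS - θO⟫ := by
      rw [inner_sub_right]; ring
    have h2 : |y i| = 1 := by rcases hy i with h | h <;> simp [h]
    rw [h1, abs_mul, h2, one_mul]
    calc |⟪w i, θS - θO⟫| ≤ ‖w i‖ * ‖θS - θO‖ := abs_real_inner_le_norm _ _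
      _ ≤ ‖w i‖ * r := by
          exact mul_le_mul_of_nonneg_left hdev (norm_nonneg _)
      _ = r * ‖w i‖ := mul_comm _ _
  constructor
  · apply card_le_card
    intro i hi
    simp only [mem_filter, mem_univ, true_and] at hi ⊢
    have := key i
    have := abs_le.mp this
    linarith [this.2]
  · have hdisj : Disjoint
        (univ.filter fun i : Fin n' => y i * ⟪w i, θS⟫ ≤ 0)
        (univ.filter fun i : Fin n' => 0 < y i * ⟪w i, θO⟫ - r * ‖w i‖) := by
      rw [Finset.disjoint_left]
      intro i hi1 hi2
      simp only [mem_filter, mem_univ, true_and] at hi1 hi2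
      have := abs_le.mp (key i)
      exact absurd hi2 (by push_neg; linarith [this.1])
    have := card_union_of_disjoint hdisj
    have hle : ((univ.filter fun i : Fin n' => y i * ⟪w i, θS⟫ ≤ 0) ∪
        (univ.filter fun i : Fin n' => 0 < y i * ⟪w i, θO⟫ - r * ‖w i‖)).card ≤ n' :=
      (card_le_card (subset_univ _)).trans_eq (Finset.card_fin n')
    omega
end
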